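/- arXiv:2102.04572 — 3 statements merged into one kernel-verified Lean document; each statement's English description precedes it below -/
import Mathlib

section
/- Let H be a complex Hilbert space, let T be a bounded linear operator on H with Cartesian components T_H = (T + T*)/2 and T_S = (T − T*)/(2i), and let α, β, γ, δ > 0 be real numbers. Define the rectangle R(T) = {x + iy : x, y ∈ ℝ, |x| ≤ ‖T_H‖, |y| ≤ ‖T_S‖} and the parallelogram P(T) = {x + iy : x, y ∈ ℝ, |αx + βy| ≤ ‖α T_H + β T_S‖, |γx − δy| ≤ ‖γ T_H − δ T_S‖}, where ‖·‖ is the operator norm. Then the closure of the numerical range W(T) is contained in R(T) ∩ P(T). -/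
open scoped ComplexInnerProductSpace

lemma aux_inner_bound {H : Type*} [NormedAddCommGroup H] [InnerProductSpace ℂ H]
    (A : H →L[ℂ] H) (u : H) (hu : ‖u‖ = 1) : ‖(⟪u, A u⟫ : ℂ)‖ ≤ ‖A‖ := by
  calc ‖(⟪u, A u⟫ : ℂ)‖ = ‖(⟪u, A u⟫ : ℂ)‖ := rfl
    _ ≤ ‖u‖ * ‖A u‖ := norm_inner_le_norm u (A u)
    _ ≤ ‖u‖ * (‖A‖ * ‖u‖) := by gcongr; exact A.le_opNorm u
    _ = ‖A‖ := by rw [hu]; ring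

/-- For `T ∈ B(H)` with Cartesian components `T_H`, `T_S`, and positive
reals `α, β, γ, δ`, the closure of the numerical range `W(T)` is contained in the
intersection of the rectangle `R(T) = {x+iy : |x| ≤ ‖T_H‖, |y| ≤ ‖T_S‖}` and the
parallelogram `P(T) = {x+iy : |αx+βy| ≤ ‖αT_H+βT_S‖, |γx−δy| ≤ ‖γT_H−δT_S‖}`. -/
theorem closure_numericalRange_subset_rect_inter_parallelogram
    {H : Type*} [NormedAddCommGroup H] [InnerProductSpace ℂ H] [CompleteSpace H]
    (T TH TS : H →L[ℂ] H)
    (hTH : TH = (2 : ℂ)⁻¹ • (T + ContinuousLinearMap.adjoint T))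
    (hTS : TS = (2 * Complex.I)⁻¹ • (T - ContinuousLinearMap.adjoint T))
    (α β γ δ : ℝ) (hα : 0 < α) (hβ : 0 < β) (hγ : 0 < γ) (hδ : 0 < δ) :
    closure {z : ℂ | ∃ u : H, ‖u‖ = 1 ∧ (⟪u, T u⟫ : ℂ) = z} ⊆
      {z : ℂ | |z.re| ≤ ‖TH‖ ∧ |z.im| ≤ ‖TS‖} ∩
      {z : ℂ | |α * z.re + β * z.im| ≤ ‖α • TH + β • TS‖ ∧
               |γ * z.re - δ * z.im| ≤ ‖γ • TH - δ • TS‖} := by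
  apply closure_minimal
  · rintro z ⟨u, hu, hz⟩
    have hadj : (⟪u, ContinuousLinearMap.adjoint T u⟫ : ℂ) = starRingEnd ℂ ⟪u, T u⟫ := by
      rw [ContinuousLinearMap.adjoint_inner_right, ← inner_conj_symm]
    have hTHu : (⟪u, TH u⟫ : ℂ) = (z.re : ℂ) := by
      rw [hTH]
      simp only [ContinuousLinearMap.smul_apply, ContinuousLinearMap.add_apply,
        inner_smul_right, inner_add_right, hadj, hz]
      rw [Complex.add_conj]
      push_cast
      ring
    have hTSu : (⟪u, TS u⟫ : ℂ) = (z.im : ℂ) := by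
      rw [hTS]
      simp only [ContinuousLinearMap.smul_apply, ContinuousLinearMap.sub_apply,
        inner_smul_right, inner_sub_right, hadj, hz]
      rw [Complex.sub_conj]
      field_simp
      push_cast
      ring
    have key : ∀ a b : ℝ, |a * z.re + b * z.im| ≤ ‖a • TH + b • TS‖ := by
      intro a b
      have : (⟪u, (a • TH + b • TS) u⟫ : ℂ) = ((a * z.re + b * z.im : ℝ) : ℂ) := by
        simp only [ContinuousLinearMap.smul_apply, ContinuousLinearMap.add_apply,
          ← Complex.coe_smul, inner_smul_right, inner_add_right, hTHu, hTSu]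
        push_cast
        ring
      have hb := aux_inner_bound (a • TH + b • TS) u hu
      rwa [this, Complex.norm_real, Real.norm_eq_abs] at hb
    constructor
    · constructor
      · have := key 1 0
        simpa using this
      · have := key 0 1
        simpa using this
    · constructor
      · exact key α β
      · have := key γ (-δ)
        rw [show γ • TH + (-δ) • TS = γ • TH - δ • TS by module] at this
        convert this using 2
        ring
  · apply IsClosed.inter
    · exact IsClosed.inter
        (isClosed_le ((by fun_prop : Continuous fun z : ℂ => |z.re|)) continuous_const)
        (isClosed_le ((by fun_prop : Continuous fun z : ℂ => |z.im|)) continuous_const)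
    · exact IsClosed.inter
        (isClosed_le ((by fun_prop : Continuous fun z : ℂ => |α * z.re + β * z.im|)) continuous_const)
        (isClosed_le ((by fun_prop : Continuous fun z : ℂ => |γ * z.re - δ * z.im|)) continuous_const)
end

section
/- Let H be a complex Hilbert space and let T be a bounded linear operator on H with Cartesian components T_H = (T + T*)/2 and T_S = (T − T*)/(2i), and suppose T is not of the form c·Q for any complex scalar c and self-adjoint bounded operator Q. Then the closure of the numerical range W(T) is contained in the convex hull (over ℝ, in ℂ ≅ ℝ²) of the eight points (‖T_S‖ − ‖T_H − T_S‖, ‖T_S‖), (‖T_H − T_S‖ − ‖T_S‖, −‖T_S‖), (‖T_H + T_S‖ − ‖T_S‖, ‖T_S‖), (‖T_S‖ − ‖T_H + T_S‖, −‖T_S‖), (‖T_H‖, ‖T_H + T_S‖ − ‖T_H‖), (−‖T_H‖, ‖T_H‖ − ‖T_H + T_S‖), (‖T_H‖, ‖T_H‖ − ‖T_H − T_S‖), (−‖T_H‖, ‖T_H − T_S‖ − ‖T_H‖), where ‖·‖ is the operator norm. This convex hull is a quadrilateral, hexagon, or octagon symmetric with respect to the origin. -/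
open scoped ComplexInnerProductSpace

/-- If `T ∈ B(H)` (with Cartesian components `T_H`, `T_S`) is not a
complex multiple of a self-adjoint operator, then the closure of the numerical range
is contained in the convex hull of the eight listed points in `ℂ ≅ ℝ²`, a hull that is
symmetric with respect to the origin. -/
theorem closure_numericalRange_subset_convexHull_octagon
    {H : Type*} [NormedAddCommGroup H] [InnerProductSpace ℂ H] [CompleteSpace H]
    (T TH TS : H →L[ℂ] H)
    (hTH : TH = (2 : ℂ)⁻¹ • (T + ContinuousLinearMap.adjoint T))
    (hTS : TS = (2 * Complex.I)⁻¹ • (T - ContinuousLinearMap.adjoint T))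
    (hT : ¬ ∃ (c : ℂ) (Q : H →L[ℂ] H), IsSelfAdjoint Q ∧ T = c • Q) :
    closure {z : ℂ | ∃ u : H, ‖u‖ = 1 ∧ (⟪u, T u⟫ : ℂ) = z} ⊆
      convexHull ℝ
        ({ Complex.mk (‖TS‖ - ‖TH - TS‖) ‖TS‖,
           Complex.mk (‖TH - TS‖ - ‖TS‖) (-‖TS‖),
           Complex.mk (‖TH + TS‖ - ‖TS‖) ‖TS‖,
           Complex.mk (‖TS‖ - ‖TH + TS‖) (-‖TS‖),
           Complex.mk ‖TH‖ (‖TH + TS‖ - ‖TH‖),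
           Complex.mk (-‖TH‖) (‖TH‖ - ‖TH + TS‖),
           Complex.mk ‖TH‖ (‖TH‖ - ‖TH - TS‖),
           Complex.mk (-‖TH‖) (‖TH - TS‖ - ‖TH‖)} : Set ℂ) ∧
    ∀ z ∈ convexHull ℝ
        ({ Complex.mk (‖TS‖ - ‖TH - TS‖) ‖TS‖,
           Complex.mk (‖TH - TS‖ - ‖TS‖) (-‖TS‖),
           Complex.mk (‖TH + TS‖ - ‖TS‖) ‖TS‖,
           Complex.mk (‖TS‖ - ‖TH + TS‖) (-‖TS‖),
           Complex.mk ‖TH‖ (‖TH + TS‖ - ‖TH‖),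
           Complex.mk (-‖TH‖) (‖TH‖ - ‖TH + TS‖),
           Complex.mk ‖TH‖ (‖TH‖ - ‖TH - TS‖),
           Complex.mk (-‖TH‖) (‖TH - TS‖ - ‖TH‖)} : Set ℂ),
      -z ∈ convexHull ℝ
        ({ Complex.mk (‖TS‖ - ‖TH - TS‖) ‖TS‖,
           Complex.mk (‖TH - TS‖ - ‖TS‖) (-‖TS‖),
           Complex.mk (‖TH + TS‖ - ‖TS‖) ‖TS‖,
           Complex.mk (‖TS‖ - ‖TH + TS‖) (-‖TS‖),
           Complex.mk ‖TH‖ (‖TH + TS‖ - ‖TH‖),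
           Complex.mk (-‖TH‖) (‖TH‖ - ‖TH + TS‖),
           Complex.mk ‖TH‖ (‖TH‖ - ‖TH - TS‖),
           Complex.mk (-‖TH‖) (‖TH - TS‖ - ‖TH‖)} : Set ℂ) := by
  set a : ℝ := ‖TH‖ with ha
  set b : ℝ := ‖TS‖ with hb
  set c : ℝ := ‖TH + TS‖ with hc
  set d : ℝ := ‖TH - TS‖ with hd
  set V : Set ℂ :=
      ({ Complex.mk (b - d) b, Complex.mk (d - b) (-b),
         Complex.mk (c - b) b, Complex.mk (b - c) (-b),
         Complex.mk a (c - a), Complex.mk (-a) (a - c),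
         Complex.mk a (a - d), Complex.mk (-a) (d - a)} : Set ℂ) with hV
  have hVfin : V.Finite := Set.toFinite _
  have hclosed : IsClosed (convexHull ℝ V) := hVfin.isClosed_convexHull ℝ
  constructor
  · refine closure_minimal ?_ hclosed
    rintro z ⟨u, hu, rfl⟩
    set z : ℂ := (⟪u, T u⟫ : ℂ) with hz
    set x : ℝ := z.re
    set y : ℝ := z.im
    -- the basic bound
    have key : ∀ (A : H →L[ℂ] H) (r : ℝ), (⟪u, A u⟫ : ℂ) = (r : ℂ) → |r| ≤ ‖A‖ := by
      intro A r h
      have h1 : ‖(⟪u, A u⟫ : ℂ)‖ ≤ ‖u‖ * ‖A u‖ := norm_inner_le_norm u (A u)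
      have h2 : ‖A u‖ ≤ ‖A‖ * ‖u‖ := A.le_opNorm u
      rw [h] at h1
      simp only [Complex.norm_real, Real.norm_eq_abs] at h1
      calc |r| ≤ ‖u‖ * ‖A u‖ := h1
        _ ≤ ‖u‖ * (‖A‖ * ‖u‖) := by gcongr
        _ = ‖A‖ := by rw [hu]; ring
    have hadj : (⟪u, ContinuousLinearMap.adjoint T u⟫ : ℂ) = starRingEnd ℂ z := by
      rw [ContinuousLinearMap.adjoint_inner_right, ← inner_conj_symm]
    have hTHu : (⟪u, TH u⟫ : ℂ) = (x : ℂ) := by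
      rw [hTH]
      simp only [ContinuousLinearMap.smul_apply, ContinuousLinearMap.add_apply,
        inner_smul_right, inner_add_right, hadj, ← hz]
      rw [Complex.add_conj]
      push_cast
      ring
    have hTSu : (⟪u, TS u⟫ : ℂ) = (y : ℂ) := by
      rw [hTS]
      simp only [ContinuousLinearMap.smul_apply, ContinuousLinearMap.sub_apply,
        inner_smul_right, inner_sub_right, hadj, ← hz]
      rw [Complex.sub_conj]
      have hI : Complex.I ≠ 0 := Complex.I_ne_zero
      field_simp
      ring_nf
      push_cast; rfl
    have hsum : (⟪u, (TH + TS) u⟫ : ℂ) = ((x + y : ℝ) : ℂ) := by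
      simp only [ContinuousLinearMap.add_apply, inner_add_right, hTHu, hTSu]
      push_cast; ring
    have hdiff : (⟪u, (TH - TS) u⟫ : ℂ) = ((x - y : ℝ) : ℂ) := by
      simp only [ContinuousLinearMap.sub_apply, inner_sub_right, hTHu, hTSu]
      push_cast; ring
    have hx := key TH x hTHu
    have hy := key TS y hTSu
    have hxy := key (TH + TS) (x + y) hsum
    have hxy' := key (TH - TS) (x - y) hdiff
    rw [← ha] at hx; rw [← hb] at hy; rw [← hc] at hxy; rw [← hd] at hxy'
    obtain ⟨hx1, hx2⟩ := abs_le.mp hx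
    obtain ⟨hy1, hy2⟩ := abs_le.mp hy
    obtain ⟨hc1, hc2⟩ := abs_le.mp hxy
    obtain ⟨hd1, hd2⟩ := abs_le.mp hxy'
    by_contra hcon
    obtain ⟨f, u0, hlt, hgt⟩ :=
      geometric_hahn_banach_closed_point (convex_convexHull ℝ V) hclosed hcon
    set p : ℝ := f 1 with hp
    set q : ℝ := f Complex.I with hq
    have hfmk : ∀ s t : ℝ, f (Complex.mk s t) = p * s + q * t := by
      intro s t
      have : Complex.mk s t = s • (1 : ℂ) + t • Complex.I := by
        simp [Complex.ext_iff, Complex.real_smul]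
      rw [this, map_add, map_smul, map_smul, smul_eq_mul, smul_eq_mul, hp, hq]
      ring
    have hfz : f z = p * x + q * y := by
      have : z = x • (1 : ℂ) + y • Complex.I := by
        simp [Complex.ext_iff, Complex.real_smul]
        exact ⟨rfl, rfl⟩
      rw [this, map_add, map_smul, map_smul, smul_eq_mul, smul_eq_mul, hp, hq]
      ring
    rw [hfz] at hgt
    have hmem : ∀ v ∈ V, f v < u0 := fun v hv => hlt v (subset_convexHull ℝ V hv)
    have h1 := hmem (Complex.mk (b - d) b) (by simp [hV])
    have h2 := hmem (Complex.mk (d - b) (-b)) (by simp [hV])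
    have h3 := hmem (Complex.mk (c - b) b) (by simp [hV])
    have h4 := hmem (Complex.mk (b - c) (-b)) (by simp [hV])
    have h5 := hmem (Complex.mk a (c - a)) (by simp [hV])
    have h6 := hmem (Complex.mk (-a) (a - c)) (by simp [hV])
    have h7 := hmem (Complex.mk a (a - d)) (by simp [hV])
    have h8 := hmem (Complex.mk (-a) (d - a)) (by simp [hV])
    rw [hfmk] at h1 h2 h3 h4 h5 h6 h7 h8
    rcases le_total 0 p with hp0 | hp0 <;> rcases le_total 0 q with hq0 | hq0
    · rcases le_total q p with hpq | hpq
      · -- vertex (a, c-a) : p*a + q*(c-a)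
        have e1 : q * (x + y) ≤ q * c := mul_le_mul_of_nonneg_left hc2 hq0
        have e2 : (p - q) * x ≤ (p - q) * a :=
          mul_le_mul_of_nonneg_left hx2 (by linarith)
        linarith [e1, e2, h5, hgt]
      · have e1 : p * (x + y) ≤ p * c := mul_le_mul_of_nonneg_left hc2 hp0
        have e2 : (q - p) * y ≤ (q - p) * b :=
          mul_le_mul_of_nonneg_left hy2 (by linarith)
        linarith [e1, e2, h3, hgt]
    · rcases le_total (-q) p with hpq | hpq
      · have e1 : (-q) * (x - y) ≤ (-q) * d :=
          mul_le_mul_of_nonneg_left hd2 (by linarith)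
        have e2 : (p + q) * x ≤ (p + q) * a :=
          mul_le_mul_of_nonneg_left hx2 (by linarith)
        linarith [e1, e2, h7, hgt]
      · have e1 : p * (x - y) ≤ p * d := mul_le_mul_of_nonneg_left hd2 hp0
        have e2 : (-(p + q)) * (-y) ≤ (-(p + q)) * b :=
          mul_le_mul_of_nonneg_left (by linarith) (by linarith)
        linarith [e1, e2, h2, hgt]
    · rcases le_total q (-p) with hpq | hpq
      · have e1 : q * (y - x) ≤ q * d :=
          mul_le_mul_of_nonneg_left (by linarith) hq0
        have e2 : (-(p + q)) * (-x) ≤ (-(p + q)) * a :=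
          mul_le_mul_of_nonneg_left (by linarith) (by linarith)
        linarith [e1, e2, h8, hgt]
      · have e1 : (-p) * (-(x - y)) ≤ (-p) * d :=
          mul_le_mul_of_nonneg_left (by linarith) (by linarith)
        have e2 : (p + q) * y ≤ (p + q) * b :=
          mul_le_mul_of_nonneg_left hy2 (by linarith)
        linarith [e1, e2, h1, hgt]
    · rcases le_total p q with hpq | hpq
      · have e1 : (-q) * (-(x + y)) ≤ (-q) * c :=
          mul_le_mul_of_nonneg_left (by linarith) (by linarith)
        have e2 : (-(p - q)) * (-x) ≤ (-(p - q)) * a :=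
          mul_le_mul_of_nonneg_left (by linarith) (by linarith)
        linarith [e1, e2, h6, hgt]
      · have e1 : (-p) * (-(x + y)) ≤ (-p) * c :=
          mul_le_mul_of_nonneg_left (by linarith) (by linarith)
        have e2 : (-(q - p)) * (-y) ≤ (-(q - p)) * b :=
          mul_le_mul_of_nonneg_left (by linarith) (by linarith)
        linarith [e1, e2, h4, hgt]
  · intro z hz
    have hsub : -V ⊆ V := by
      intro w hw
      simp only [hV, Set.mem_neg, Set.mem_insert_iff, Set.mem_singleton_iff,
        Complex.ext_iff, Complex.neg_re, Complex.neg_im] at hw ⊢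
      rcases hw with ⟨e1, e2⟩ | ⟨e1, e2⟩ | ⟨e1, e2⟩ | ⟨e1, e2⟩ | ⟨e1, e2⟩ | ⟨e1, e2⟩ |
        ⟨e1, e2⟩ | ⟨e1, e2⟩
      · exact Or.inr (Or.inl ⟨by linarith, by linarith⟩)
      · exact Or.inl ⟨by linarith, by linarith⟩
      · exact Or.inr (Or.inr (Or.inr (Or.inl ⟨by linarith, by linarith⟩)))
      · exact Or.inr (Or.inr (Or.inl ⟨by linarith, by linarith⟩))
      · exact Or.inr (Or.inr (Or.inr (Or.inr (Or.inr (Or.inl ⟨by linarith, by linarith⟩)))))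
      · exact Or.inr (Or.inr (Or.inr (Or.inr (Or.inl ⟨by linarith, by linarith⟩))))
      · exact Or.inr (Or.inr (Or.inr (Or.inr (Or.inr (Or.inr (Or.inr
          ⟨by linarith, by linarith⟩))))))
      · exact Or.inr (Or.inr (Or.inr (Or.inr (Or.inr (Or.inr (Or.inl
          ⟨by linarith, by linarith⟩))))))
    have h1 : -z ∈ convexHull ℝ (-V) := by
      rw [convexHull_neg]
      exact Set.neg_mem_neg.mpr hz
    exact convexHull_mono hsub h1
end

section
/- Let H be a complex Hilbert space and let T be a bounded linear operator on H with Cartesian components T_H = (T + T*)/2 and T_S = (T − T*)/(2i). Define η₁ = max{ |‖T_H + T_S‖ − ‖T_H‖| , |‖T_H − T_S‖ − ‖T_H‖| } and η₂ = max{ |‖T_H + T_S‖ − ‖T_S‖| , |‖T_H − T_S‖ − ‖T_S‖| }, where ‖·‖ is the operator norm. Then for every unit vector u in H, |⟨Tu, u⟩|² ≤ max{ η₁² + ‖T_H‖² , η₂² + ‖T_S‖² }; in particular the numerical radius w(T) = sup_{‖u‖=1} |⟨Tu, u⟩| satisfies w(T) ≤ ( max{ η₁² + ‖T_H‖² ,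 η₂² + ‖T_S‖² } )^{1/2}. -/
/-!
Write `a = re ⟪u, T_H u⟫` and `b = re ⟪u, T_S u⟫`. Since `T_H`, `T_S` are self-adjoint,
`⟪u, T u⟫ = a + i b`, so `|⟪u, T u⟫|² = a² + b²`, while `|a| ≤ ‖T_H‖`, `|b| ≤ ‖T_S‖`,
`|a + b| ≤ ‖T_H + T_S‖` and `|a - b| ≤ ‖T_H - T_S‖`. What is left is an inequality about real
numbers: `a² + b²` is bounded on the octagon these four constraints cut out, and its value at
the vertices is controlled by `η₁` and `η₂`.
-/

open scoped ComplexInnerProductSpace ComplexStarModule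

lemma sq_add_sq_le_max_of_add_le {a b p q s η₁ η₂ : ℝ} (ha : 0 ≤ a) (hb : 0 ≤ b)
    (hap : a ≤ p) (hbq : b ≤ q) (habs : a + b ≤ s) (h₁ : |s - p| ≤ η₁) (h₂ : |s - q| ≤ η₂) :
    a ^ 2 + b ^ 2 ≤ max (η₁ ^ 2 + p ^ 2) (η₂ ^ 2 + q ^ 2) := by
  rw [abs_le] at h₁ h₂
  rcases le_or_gt b η₁ with hbη | hbη
  · exact le_max_of_le_left (by nlinarith)
  rcases le_or_gt a η₂ with haη | haη
  · exact le_max_of_le_right (by nlinarith)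
  -- Otherwise compare with the corner `(s - q, q)` or `(p, s - p)` of the segment `a + b = s`,
  -- along which `a² + b²` grows away from `a = b`.
  rcases le_or_gt s (2 * b) with hs | hs
  · exact le_max_of_le_right (by nlinarith [sq_nonneg (q - b), sq_nonneg (s - b - a)])
  · exact le_max_of_le_left (by nlinarith [sq_nonneg (b - η₁), sq_nonneg (s - b - a)])

lemma abs_add_abs_le_abs_add_or_abs_sub (a b : ℝ) :
    |a| + |b| ≤ |a + b| ∨ |a| + |b| ≤ |a - b| := by
  cases abs_cases a <;> cases abs_cases b <;> cases abs_cases (a + b) <;>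
    cases abs_cases (a - b) <;> first | (left; linarith) | (right; linarith)

lemma sq_add_sq_le_max_of_abs_le {a b p q s d η₁ η₂ : ℝ}
    (hap : |a| ≤ p) (hbq : |b| ≤ q) (hs : |a + b| ≤ s) (hd : |a - b| ≤ d)
    (h₁s : |s - p| ≤ η₁) (h₁d : |d - p| ≤ η₁) (h₂s : |s - q| ≤ η₂) (h₂d : |d - q| ≤ η₂) :
    a ^ 2 + b ^ 2 ≤ max (η₁ ^ 2 + p ^ 2) (η₂ ^ 2 + q ^ 2) := by
  rw [← sq_abs a, ← sq_abs b]
  rcases abs_add_abs_le_abs_add_or_abs_sub a b with h | h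
  · exact sq_add_sq_le_max_of_add_le (abs_nonneg a) (abs_nonneg b) hap hbq (h.trans hs) h₁s h₂s
  · exact sq_add_sq_le_max_of_add_le (abs_nonneg a) (abs_nonneg b) hap hbq (h.trans hd) h₁d h₂d

section StarModule

variable {A : Type*} [AddCommGroup A] [Module ℂ A] [StarAddMonoid A] [StarModule ℂ A]

lemma realPart_eq_two_inv_smul (a : A) : (ℜ a : A) = (2 : ℂ)⁻¹ • (a + star a) := by
  rw [realPart_apply_coe, ← Complex.coe_smul]
  norm_num

lemma imaginaryPart_eq_two_I_inv_smul (a : A) :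
    (ℑ a : A) = (2 * Complex.I)⁻¹ • (a - star a) := by
  rw [imaginaryPart_apply_coe, ← Complex.coe_smul, smul_smul]
  congr 1
  field_simp
  simp

end StarModule

section InnerProductSpace

variable {H : Type*} [NormedAddCommGroup H] [InnerProductSpace ℂ H]

lemma ContinuousLinearMap.abs_re_inner_map_self_le (A : H →L[ℂ] H) {u : H} (hu : ‖u‖ = 1) :
    |(⟪u, A u⟫).re| ≤ ‖A‖ :=
  calc |(⟪u, A u⟫).re| ≤ ‖⟪u, A u⟫‖ := Complex.abs_re_le_norm _
    _ ≤ ‖u‖ * ‖A u‖ := norm_inner_le_norm _ _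
    _ ≤ ‖u‖ * (‖A‖ * ‖u‖) := by gcongr; exact A.le_opNorm u
    _ = ‖A‖ := by rw [hu]; ring

lemma norm_inner_add_I_smul_apply_sq [CompleteSpace H] {A B : H →L[ℂ] H}
    (hA : IsSelfAdjoint A) (hB : IsSelfAdjoint B) (u : H) :
    ‖⟪u, (A + Complex.I • B) u⟫‖ ^ 2 = (⟪u, A u⟫).re ^ 2 + (⟪u, B u⟫).re ^ 2 := by
  have hA' : ((⟪u, A u⟫).re : ℂ) = ⟪u, A u⟫ := hA.isSymmetric.coe_re_inner_self_apply u
  have hB' : ((⟪u, B u⟫).re : ℂ) = ⟪u, B u⟫ := hB.isSymmetric.coe_re_inner_self_apply u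
  rw [add_apply, smul_apply, inner_add_right, inner_smul_right, ← hA', ← hB', Complex.sq_norm,
    mul_comm Complex.I, Complex.normSq_add_mul_I, Complex.ofReal_re, Complex.ofReal_re]

end InnerProductSpace

/-- With `η₁ = max{|‖T_H+T_S‖−‖T_H‖|, |‖T_H−T_S‖−‖T_H‖|}` and
`η₂ = max{|‖T_H+T_S‖−‖T_S‖|, |‖T_H−T_S‖−‖T_S‖|}`, for every unit vector `u` one has
`|⟨Tu,u⟩|² ≤ max{η₁² + ‖T_H‖², η₂² + ‖T_S‖²}`, and consequently the numerical radius
satisfies `w(T) ≤ (max{η₁² + ‖T_H‖², η₂² + ‖T_S‖²})^{1/2}`. -/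
theorem numericalRadius_le_octagon_bound
    {H : Type*} [NormedAddCommGroup H] [InnerProductSpace ℂ H] [CompleteSpace H]
    (T TH TS : H →L[ℂ] H)
    (hTH : TH = (2 : ℂ)⁻¹ • (T + ContinuousLinearMap.adjoint T))
    (hTS : TS = (2 * Complex.I)⁻¹ • (T - ContinuousLinearMap.adjoint T))
    (η₁ η₂ : ℝ)
    (hη₁ : η₁ = max |‖TH + TS‖ - ‖TH‖| |‖TH - TS‖ - ‖TH‖|)
    (hη₂ : η₂ = max |‖TH + TS‖ - ‖TS‖| |‖TH - TS‖ - ‖TS‖|) :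
    (∀ u : H, ‖u‖ = 1 →
        ‖(⟪u, T u⟫ : ℂ)‖ ^ 2 ≤ max (η₁ ^ 2 + ‖TH‖ ^ 2) (η₂ ^ 2 + ‖TS‖ ^ 2)) ∧
    sSup {r : ℝ | ∃ u : H, ‖u‖ = 1 ∧ r = ‖(⟪u, T u⟫ : ℂ)‖} ≤
      Real.sqrt (max (η₁ ^ 2 + ‖TH‖ ^ 2) (η₂ ^ 2 + ‖TS‖ ^ 2)) := by
  rw [← ContinuousLinearMap.star_eq_adjoint] at hTH hTS
  rw [← realPart_eq_two_inv_smul] at hTH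
  rw [← imaginaryPart_eq_two_I_inv_smul] at hTS
  have hbound : ∀ u : H, ‖u‖ = 1 →
      ‖⟪u, T u⟫‖ ^ 2 ≤ max (η₁ ^ 2 + ‖TH‖ ^ 2) (η₂ ^ 2 + ‖TS‖ ^ 2) := by
    intro u hu
    have hsum := (TH + TS).abs_re_inner_map_self_le hu
    have hdiff := (TH - TS).abs_re_inner_map_self_le hu
    rw [add_apply, inner_add_right, Complex.add_re] at hsum
    rw [sub_apply, inner_sub_right, Complex.sub_re] at hdiff
    rw [← realPart_add_I_smul_imaginaryPart T, ← hTH, ← hTS,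
      norm_inner_add_I_smul_apply_sq (hTH ▸ (ℜ T).2) (hTS ▸ (ℑ T).2)]
    exact sq_add_sq_le_max_of_abs_le (TH.abs_re_inner_map_self_le hu)
      (TS.abs_re_inner_map_self_le hu) hsum hdiff (hη₁ ▸ le_max_left _ _)
      (hη₁ ▸ le_max_right _ _) (hη₂ ▸ le_max_left _ _) (hη₂ ▸ le_max_right _ _)
  refine ⟨hbound, Real.sSup_le ?_ (Real.sqrt_nonneg _)⟩
  rintro _ ⟨u, hu, rfl⟩
  exact Real.le_sqrt_of_sq_le (hbound u hu)
end
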